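/- Let m ≥ 1. Then ρ_20 and ρ_02 are the only 1-footed prestar labellings of the closed thread T_m^∘ having exponent w_2. Moreover, π_02 is the unique 1-footed prestar labelling of T_m^∘ having exponent w_02 for which the head and the tail (the two flags incident with the identified vertex v_0) receive different labels. -/

import Mathlib

namespace FLL

/-- Flags of the thread `T_m` (obtained from the path `v_0 e_0 v_1 e_1 ⋯ e_m v_{m+1}`
by adding feet `f_{k+1} = v_{k+1} w_{k+1}` for `k = 0, …, m-1`):
* `vLeft k`  is the flag `(v_k, e_k)` for `0 ≤ k ≤ m`;
* `vRight k` is the flag `(v_{k+1}, e_k)` for `0 ≤ k ≤ m`;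
* `vFoot k`  is the flag `(v_{k+1}, f_{k+1})` for `0 ≤ k ≤ m-1`;
* `wFoot k`  is the flag `(w_{k+1}, f_{k+1})` for `0 ≤ k ≤ m-1`. -/
inductive ThreadFlag (m : ℕ) where
  | vLeft (k : Fin (m+1))
  | vRight (k : Fin (m+1))
  | vFoot (k : Fin m)
  | wFoot (k : Fin m)
deriving DecidableEq

/-- Edges of the thread `T_m`: `e k` is the path edge `e_k` (`0 ≤ k ≤ m`),
`f k` is the foot edge `f_{k+1}` (`0 ≤ k ≤ m-1`). -/
inductive ThreadEdge (m : ℕ) where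
  | e (k : Fin (m+1))
  | f (k : Fin m)
deriving DecidableEq

namespace Thread

variable {m : ℕ}

/-- A prestar labelling of `T_m`: a function from the flags to `{0,1,2}` whose
restriction to the three flags at the internal vertex `v_{k+1}` (`0 ≤ k ≤ m-1`)
is a bijection onto `{0,1,2}`. -/
def IsPrestar (π : ThreadFlag m → Fin 3) : Prop :=
  ∀ k : Fin m,
    π (.vRight k.castSucc) ≠ π (.vLeft k.succ) ∧
    π (.vRight k.castSucc) ≠ π (.vFoot k) ∧
    π (.vLeft k.succ) ≠ π (.vFoot k)

/-- The exponent of a prestar labelling: `w(e) = π(ue) + π(ve)` for each edge `e = uv`. -/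
def texp (π : ThreadFlag m → Fin 3) : ThreadEdge m → ℕ
  | .e k => (π (.vLeft k) : ℕ) + (π (.vRight k) : ℕ)
  | .f k => (π (.vFoot k) : ℕ) + (π (.wFoot k) : ℕ)

/-- A prestar labelling is 1-footed if every foot flag `w_k f_k` is labelled `1`. -/
def OneFooted (π : ThreadFlag m → Fin 3) : Prop := ∀ k : Fin m, π (.wFoot k) = 1

/-- The constant weighting `w_𝟐 ≡ 2`. -/
def w2 : ThreadEdge m → ℕ := fun _ => 2

/-- The weighting `w_11` (for `m ≥ 1`): as `w_𝟐` except `w(e_0) = 1`, `w(e_m) = 3`. -/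
def w11 : ThreadEdge m → ℕ
  | .e k => if (k : ℕ) = 0 then 1 else if (k : ℕ) = m then 3 else 2
  | .f _ => 2

/-- The weighting `w_02` (for `m ≥ 1`): as `w_𝟐` except `w(e_0) = 1`, `w(f_1) = 3`. -/
def w02 : ThreadEdge m → ℕ
  | .e k => if (k : ℕ) = 0 then 1 else 2
  | .f k => if (k : ℕ) = 0 then 3 else 2

/-- The weighting `w_20` (for `m ≥ 1`): as `w_𝟐` except `w(e_0) = 3`, `w(e_1) = 0`,
`w(f_1) = 3`. -/
def w20 : ThreadEdge m → ℕ
  | .e k => if (k : ℕ) = 0 then 3 else if (k : ℕ) = 1 then 0 else 2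
  | .f k => if (k : ℕ) = 0 then 3 else 2

/-- The 1-footed prestar labelling `ρ_02`. -/
def rho02 : ThreadFlag m → Fin 3
  | .vLeft _ => 0
  | .vRight _ => 2
  | .vFoot _ => 1
  | .wFoot _ => 1

/-- The 1-footed prestar labelling `ρ_20`. -/
def rho20 : ThreadFlag m → Fin 3
  | .vLeft _ => 2
  | .vRight _ => 0
  | .vFoot _ => 1
  | .wFoot _ => 1

/-- The prestar labelling `ρ_11` of the trivial thread `T_0` (both flags labelled 1). -/
def rho11 : ThreadFlag m → Fin 3 := fun _ => 1

/-- The 1-footed prestar labelling `π_11` (for `m ≥ 1`). -/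
def pi11 : ThreadFlag m → Fin 3
  | .vLeft k => if (k : ℕ) = 0 then 1 else 2
  | .vRight k => if (k : ℕ) = m then 1 else 0
  | .vFoot _ => 1
  | .wFoot _ => 1

/-- The 1-footed prestar labelling `π_02` (for `m ≥ 1`). -/
def pi02 : ThreadFlag m → Fin 3
  | .vLeft _ => 0
  | .vRight k => if (k : ℕ) = 0 then 1 else 2
  | .vFoot k => if (k : ℕ) = 0 then 2 else 1
  | .wFoot _ => 1

/-- The 1-footed prestar labelling `π_20` (for `m ≥ 1`). -/
def pi20 : ThreadFlag m → Fin 3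
  | .vLeft k => if (k : ℕ) = 1 then 0 else 2
  | .vRight k => if (k : ℕ) = 0 then 1 else 0
  | .vFoot k => if (k : ℕ) = 0 then 2 else 1
  | .wFoot _ => 1

/-- The exceptional 1-footed prestar labelling `π′_11` of `T_1`. -/
def pi'11 : ThreadFlag m → Fin 3
  | .vLeft _ => 1
  | .vRight k => if (k : ℕ) = 0 then 0 else 1
  | .vFoot _ => 2
  | .wFoot _ => 1

/-- Sign contribution of one pair of (edge, label) data, relative to an edge ordering. -/
def psign (ord : ThreadEdge m → ℕ) (a b : ThreadEdge m) (x y : Fin 3) : ℤ :=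
  if ord a < ord b then ((y : ℤ) - (x : ℤ)).sign else ((x : ℤ) - (y : ℤ)).sign

/-- The sign of the star labelling at the internal vertex `v_{k+1}`: the sign of the
permutation of `{0,1,2}` given by the labels of the three flags at `v_{k+1}` taken in
increasing edge order (computed as a product over the three pairs of flags). -/
def vsgn (ord : ThreadEdge m → ℕ) (π : ThreadFlag m → Fin 3) (k : Fin m) : ℤ :=
  psign ord (.e k.castSucc) (.e k.succ) (π (.vRight k.castSucc)) (π (.vLeft k.succ)) *
  psign ord (.e k.castSucc) (.f k) (π (.vRight k.castSucc)) (π (.vFoot k)) *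
  psign ord (.e k.succ) (.f k) (π (.vLeft k.succ)) (π (.vFoot k))

/-- The sign of a prestar labelling of `T_m`: `sgn(π) = ∏_{k=1}^m sgn(π_{v_k})`. -/
def psgn (ord : ThreadEdge m → ℕ) (π : ThreadFlag m → Fin 3) : ℤ :=
  ∏ k : Fin m, vsgn ord π k

end Thread
end FLL

open FLL FLL.Thread

private lemma fin3_ne_val {a b : Fin 3} (h : a ≠ b) : (a : ℕ) ≠ (b : ℕ) :=
  fun h' => h (Fin.ext h')

private lemma fll_part1 (m : ℕ) (hm : 1 ≤ m) (π : ThreadFlag m → Fin 3)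
    (h1 : IsPrestar π) (h2 : OneFooted π) (h3 : texp π = w2) :
    π = rho20 ∨ π = rho02 := by
  have hsum : ∀ k : Fin (m+1), ((π (.vLeft k)) : ℕ) + ((π (.vRight k)) : ℕ) = 2 := by
    intro k; simpa [texp, w2] using congrFun h3 (.e k)
  have hfoot : ∀ k : Fin m, ((π (.vFoot k)) : ℕ) = 1 := by
    intro k
    have h := congrFun h3 (.f k)
    simp only [texp, w2, h2 k, Fin.val_one] at h
    omega
  set k0 : Fin m := ⟨0, hm⟩ with hk0
  have hc0 : k0.castSucc = (0 : Fin (m+1)) := rfl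
  have hL0 : ((π (.vLeft 0)) : ℕ) ≠ 1 := by
    have hne := fin3_ne_val (h1 k0).2.1
    rw [hc0] at hne
    have hf := hfoot k0
    have hs := hsum 0
    omega
  have hL0lt : ((π (.vLeft 0)) : ℕ) < 3 := (π _).isLt
  have key : ∀ k : Fin (m+1), ((π (.vLeft k)) : ℕ) = ((π (.vLeft 0)) : ℕ) := by
    intro k
    induction k using Fin.induction with
    | zero => rfl
    | succ k ih =>
      have e1 := fin3_ne_val (h1 k).1
      have e2 := fin3_ne_val (h1 k).2.1
      have e3 := fin3_ne_val (h1 k).2.2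
      have hf := hfoot k
      have hs := hsum k.castSucc
      have hb1 : ((π (.vLeft k.succ)) : ℕ) < 3 := (π _).isLt
      omega
  have hR : ∀ k : Fin (m+1), ((π (.vRight k)) : ℕ) = 2 - ((π (.vLeft 0)) : ℕ) := by
    intro k
    have := hsum k
    have := key k
    have : ((π (.vRight 0)) : ℕ) < 3 := (π _).isLt
    have := hsum 0
    omega
  have hcases : ((π (.vLeft 0)) : ℕ) = 0 ∨ ((π (.vLeft 0)) : ℕ) = 2 := by omega
  rcases hcases with h0 | h0
  · right
    funext x
    cases x with
    | vLeft k => apply Fin.ext; simp only [rho02]; rw [key k, h0]; rfl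
    | vRight k => apply Fin.ext; simp only [rho02]; rw [hR k, h0]; rfl
    | vFoot k => apply Fin.ext; simp only [rho02]; rw [hfoot k]; rfl
    | wFoot k => exact h2 k
  · left
    funext x
    cases x with
    | vLeft k => apply Fin.ext; simp only [rho20]; rw [key k, h0]; rfl
    | vRight k => apply Fin.ext; simp only [rho20]; rw [hR k, h0]; rfl
    | vFoot k => apply Fin.ext; simp only [rho20]; rw [hfoot k]; rfl
    | wFoot k => exact h2 k

private lemma fll_part2 (m : ℕ) (hm : 1 ≤ m) (π : ThreadFlag m → Fin 3)
    (h1 : IsPrestar π) (h2 : OneFooted π) (h3 : texp π = w02)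
    (h4 : π (.vLeft 0) ≠ π (.vRight (Fin.last m))) : π = pi02 := by
  have hsum : ∀ k : Fin (m+1),
      ((π (.vLeft k)) : ℕ) + ((π (.vRight k)) : ℕ) = if (k : ℕ) = 0 then 1 else 2 := by
    intro k; simpa [texp, w02] using congrFun h3 (.e k)
  have hfoot : ∀ k : Fin m, ((π (.vFoot k)) : ℕ) = if (k : ℕ) = 0 then 2 else 1 := by
    intro k
    have h := congrFun h3 (.f k)
    simp only [texp, w02, h2 k, Fin.val_one] at h
    rcases eq_or_ne ((k : ℕ)) 0 with h0 | h0
    · rw [if_pos h0] at h ⊢; omega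
    · rw [if_neg h0] at h ⊢; omega
  set k0 : Fin m := ⟨0, hm⟩ with hk0
  have hc0 : k0.castSucc = (0 : Fin (m+1)) := rfl
  have hk0v : (k0 : ℕ) = 0 := rfl
  have hf0 : ((π (.vFoot k0)) : ℕ) = 2 := by rw [hfoot k0]; simp [hk0v]
  have hs0 : ((π (.vLeft 0)) : ℕ) + ((π (.vRight 0)) : ℕ) = 1 := by
    have := hsum 0; simpa using this
  have e01 := fin3_ne_val (h1 k0).1
  have e02 := fin3_ne_val (h1 k0).2.1
  have e03 := fin3_ne_val (h1 k0).2.2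
  rw [hc0] at e01 e02
  have hR0lt : ((π (.vRight 0)) : ℕ) < 3 := (π _).isLt
  have hL1lt : ((π (.vLeft k0.succ)) : ℕ) < 3 := (π _).isLt
  have hcases : ((π (.vRight 0)) : ℕ) = 1 ∨ ((π (.vRight 0)) : ℕ) = 0 := by omega
  rcases hcases with hR0 | hR0
  · -- the good case: π = pi02
    have hL0 : ((π (.vLeft 0)) : ℕ) = 0 := by omega
    have key : ∀ k : Fin (m+1), ((π (.vLeft k)) : ℕ) = 0 ∧
        ((π (.vRight k)) : ℕ) = if (k : ℕ) = 0 then 1 else 2 := by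
      intro k
      induction k using Fin.induction with
      | zero => have hz := And.intro hL0 hR0; simpa using hz
      | succ k ih =>
        simp only [Fin.coe_castSucc] at ih
        have e1 := fin3_ne_val (h1 k).1
        have e2 := fin3_ne_val (h1 k).2.1
        have e3 := fin3_ne_val (h1 k).2.2
        have hf := hfoot k
        have hs := hsum k.succ
        have hb1 : ((π (.vLeft k.succ)) : ℕ) < 3 := (π _).isLt
        rw [if_neg (by simp [Fin.val_succ])] at hs
        rw [if_neg (by simp [Fin.val_succ])]
        rcases eq_or_ne ((k : ℕ)) 0 with h0 | h0
        · rw [if_pos h0] at ih hf; omega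
        · rw [if_neg h0] at ih hf; omega
    funext x
    cases x with
    | vLeft k =>
      apply Fin.ext; rw [(key k).1]; rfl
    | vRight k =>
      apply Fin.ext; rw [(key k).2]
      by_cases h0 : (k : ℕ) = 0 <;> simp [pi02, h0]
    | vFoot k =>
      apply Fin.ext; rw [hfoot k]
      by_cases h0 : (k : ℕ) = 0 <;> simp [pi02, h0]
    | wFoot k => exact h2 k
  · -- the bad case: contradiction
    exfalso
    have hL0 : ((π (.vLeft 0)) : ℕ) = 1 := by omega
    have hL1 : ((π (.vLeft k0.succ)) : ℕ) = 1 := by omega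
    have hs1 : ((π (.vLeft k0.succ)) : ℕ) + ((π (.vRight k0.succ)) : ℕ) = 2 := by
      have := hsum k0.succ
      simpa using this
    have hR1 : ((π (.vRight k0.succ)) : ℕ) = 1 := by omega
    rcases Nat.lt_or_ge 1 m with hm2 | hm1
    · -- m ≥ 2 : contradiction at vertex 1
      set k1 : Fin m := ⟨1, hm2⟩ with hk1
      have hc1 : k1.castSucc = k0.succ := rfl
      have e2' := fin3_ne_val (h1 k1).2.1
      rw [hc1] at e2'
      have hf1 : ((π (.vFoot k1)) : ℕ) = 1 := by rw [hfoot k1]; rfl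
      omega
    · -- m = 1 : head/tail contradiction
      have hm1' : m = 1 := le_antisymm hm1 hm
      subst hm1'
      have hlast : Fin.last 1 = k0.succ := rfl
      apply h4
      apply Fin.ext
      rw [hlast, hL0, hR1]

/-- Lemma 3.3.  For `m ≥ 1`, consider the closed thread `T_m^∘`
(obtained from `T_m` by identifying `v_0` with `v_{m+1}`; its flags, edges, prestar
labellings, 1-footedness and exponents are the same as those of `T_m`, no star condition
being imposed at the identified vertex `v_0`).  Then `ρ_20` and `ρ_02` are the only
1-footed prestar labellings of `T_m^∘` with exponent `w_𝟐`; and `π_02` is the unique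
1-footed prestar labelling of `T_m^∘` with exponent `w_02` in which the head `v_0 e_0`
and the tail `v_0 e_m` (the two flags at the identified vertex) receive different
labels. -/
theorem statement8 (m : ℕ) (hm : 1 ≤ m) :
    (∀ π : ThreadFlag m → Fin 3,
      (IsPrestar π ∧ OneFooted π ∧ texp π = w2) ↔ (π = rho20 ∨ π = rho02)) ∧
    (∀ π : ThreadFlag m → Fin 3,
      (IsPrestar π ∧ OneFooted π ∧ texp π = w02 ∧
        π (.vLeft 0) ≠ π (.vRight (Fin.last m))) ↔ π = pi02) := by
  constructor
  · intro π
    constructor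
    · rintro ⟨h1, h2, h3⟩
      exact fll_part1 m hm π h1 h2 h3
    · rintro (rfl | rfl)
      · refine ⟨fun k => ?_, fun k => rfl, ?_⟩
        · refine ⟨?_, ?_, ?_⟩ <;> simp [rho20]
        · funext e; cases e <;> rfl
      · refine ⟨fun k => ?_, fun k => rfl, ?_⟩
        · refine ⟨?_, ?_, ?_⟩ <;> simp [rho02]
        · funext e; cases e <;> rfl
  · intro π
    constructor
    · rintro ⟨h1, h2, h3, h4⟩
      exact fll_part2 m hm π h1 h2 h3 h4
    · rintro rfl
      refine ⟨fun k => ?_, fun k => rfl, ?_, ?_⟩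
      · refine ⟨?_, ?_, ?_⟩ <;>
          simp only [pi02, Fin.coe_castSucc, Fin.val_succ] <;>
          by_cases h0 : (k : ℕ) = 0 <;> simp [h0]
      · funext e
        cases e with
        | e k => simp only [texp, w02, pi02]; split <;> rfl
        | f k => simp only [texp, w02, pi02]; split <;> rfl
      · have hlast : ((Fin.last m : Fin (m+1)) : ℕ) = m := rfl
        simp only [pi02, hlast]
        rw [if_neg (by omega)]
        decide
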